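/- Let Cay²(A;G;B) be a λ-expander left/right Cayley complex with |A| = |B| = r, and C₁ ≤ F_2^r a code with δ(C₁) > λ. Then the left/right Cayley expander code C[G,A,B,C₁] has normalized distance at least (1/4)·δ(C₁)²·(δ(C₁) − λ). -/

import Mathlib

/-!
Let `f` be a nonzero codeword, nonzero at `(a₀, g₀, b₀)`. Its view along `(a₀, g₀)` is a nonzero
word of `C₁`, so `f (a₀, g₀, b) ≠ 0` for at least `δ r` elements `b`. For each such `b` the slice
`(a, g) ↦ f (a, g, b)` is a nonzero codeword of the Sipser–Spielman code on `Cay(A;G)`: every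
vertex of its support meets at least `δ r` nonzero edges, and these edges stay inside the support,
so the expander mixing lemma forces the support to have at least `(δ - λ) |G| / 2` vertices.
Hence `f` is nonzero on at least `δ² r² (δ - λ) |G| / 2` triples. A square carries at most four
triples, and there are at most `r² |G| / 2` squares since `(a, g, b)` and `(a⁻¹, a g, b)` name
the same square. If `δ ≤ 0` the bound is below `1`: the mixing lemma on a single vertex gives
`λ (|G| - 1) ≥ -1`.
-/

open Finset

/-- The square `[a,g,b]` of the left/right Cayley complex, as the set of its four
(representative) triples. -/
def cSquare {G : Type*} [Group G] [DecidableEq G] (a g b : G) : Finset (G × G × G) :=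
  {(a, g, b), (a⁻¹, a * g, b), (a⁻¹, a * g * b, b⁻¹), (a, g * b, b⁻¹)}

/-- `Cay(A;G)` is a `λ`-expander, in the one-sided quadratic-form sense: on functions orthogonal
to the constants the unnormalised adjacency operator is bounded above by `λ |A|`. -/
def IsLeftExpander {G : Type*} [Group G] [Fintype G] (A : Finset G) (lam : ℝ) : Prop :=
  ∀ h : G → ℝ, ∑ g, h g = 0 → ∑ g, h g * ∑ a ∈ A, h (a * g) ≤ lam * #A * ∑ g, h g ^ 2

namespace IsLeftExpander

variable {G : Type*} [Group G] [Fintype G] {A : Finset G} {lam : ℝ}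

/-- The expander mixing lemma, obtained by testing `hA` on the centred indicator of `S`. -/
theorem sum_card_filter_le [DecidableEq G] (hA : IsLeftExpander A lam) (S : Finset G) :
    ∑ g ∈ S, (#{a ∈ A | a * g ∈ S} : ℝ) ≤
      #A * #S ^ 2 / Fintype.card G + lam * #A * (#S - #S ^ 2 / Fintype.card G) := by
  set c : ℝ := #S / Fintype.card G
  have hc : Fintype.card G * c = #S := by simp [c]; field_simp
  let χ : G → ℝ := fun g => if g ∈ S then 1 else 0
  have hχ : ∑ g, χ g = #S := by simp [χ]
  have hχ_sq (g : G) : χ g ^ 2 = χ g := by by_cases g ∈ S <;> simp [χ, *]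
  have hshift (a : G) : ∑ g, χ (a * g) = #S := Equiv.sum_comp (Equiv.mulLeft a) χ ▸ hχ
  have hmean : ∑ g, (χ g - c) = 0 := by simp [sum_sub_distrib, hχ, hc]
  have hedges : ∑ g, χ g * ∑ a ∈ A, χ (a * g) = ∑ g ∈ S, (#{a ∈ A | a * g ∈ S} : ℝ) := by
    simp [χ]
  have hlhs : ∑ g, (χ g - c) * ∑ a ∈ A, (χ (a * g) - c) =
      ∑ g, χ g * ∑ a ∈ A, χ (a * g) - #A * #S ^ 2 / Fintype.card G := by
    have hterm (g : G) : (χ g - c) * ∑ a ∈ A, (χ (a * g) - c) =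
        χ g * ∑ a ∈ A, χ (a * g) - c * ∑ a ∈ A, χ (a * g) - #A * c * χ g + #A * c ^ 2 := by
      simp only [sum_sub_distrib, sum_const, nsmul_eq_mul]; ring
    rw [sum_congr rfl fun g _ => hterm g]
    simp only [sum_add_distrib, sum_sub_distrib, ← mul_sum]
    rw [sum_comm (s := univ)]
    simp only [hshift, hχ, sum_const, card_univ, nsmul_eq_mul]
    rw [← hc]; field_simp; ring
  have hrhs : ∑ g, (χ g - c) ^ 2 = #S - #S ^ 2 / Fintype.card G := by
    have hterm (g : G) : (χ g - c) ^ 2 = χ g - 2 * c * χ g + c ^ 2 := by linear_combination hχ_sq g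
    simp only [hterm, sum_add_distrib, sum_sub_distrib, ← mul_sum, hχ, sum_const, card_univ,
      nsmul_eq_mul]
    rw [← hc]; field_simp; ring
  have := hA _ hmean
  rw [hlhs, hedges, hrhs] at this
  linarith

theorem neg_one_le_mul_card_sub_one (hA : IsLeftExpander A lam) (hne : A.Nonempty) :
    -1 ≤ lam * (Fintype.card G - 1) := by
  classical
  have hr : (0 : ℝ) < #A := by exact_mod_cast hne.card_pos
  have hn : (0 : ℝ) < Fintype.card G := by exact_mod_cast Fintype.card_pos
  have h := (sum_nonneg fun g _ => Nat.cast_nonneg _).trans (hA.sum_card_filter_le {1})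
  simp only [card_singleton, Nat.cast_one, one_pow] at h
  have : #A / Fintype.card G * (1 + lam * (Fintype.card G - 1)) =
      #A * 1 / Fintype.card G + lam * #A * (1 - 1 / Fintype.card G) := by
    field_simp
  nlinarith [div_pos hr hn]

/-- The Sipser–Spielman distance bound. `q` is the support of a codeword, read on directed edges:
`(a, g)` stands for the edge `{g, a g}` seen from `g`. -/
theorem le_card_filter_of_closed (hA : IsLeftExpander A lam) {δ : ℝ} (hlam : -1 ≤ lam)
    (hδ : 0 ≤ δ) (q : A × G → Prop) [DecidablePred q]
    (hclosed : ∀ a g, q (a, g) → ∃ a', q (a', a * g))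
    (hlocal : ∀ g, (∃ a, q (a, g)) → δ * #A ≤ #{a | q (a, g)})
    (hne : ∃ x, q x) :
    δ * #A * ((δ - lam) * Fintype.card G / 2) ≤ #{x | q x} := by
  classical
  set S : Finset G := {g | ∃ a, q (a, g)}
  have hsplit : (#{x | q x} : ℝ) = ∑ g ∈ S, (#{a | q (a, g)} : ℝ) := by
    simp only [card_filter, Nat.cast_sum]
    rw [Fintype.sum_prod_type_right]
    refine (sum_subset (subset_univ S) fun g _ hg => ?_).symm
    simp_all [S]
  have hlow : δ * #A * #S ≤ ∑ g ∈ S, (#{a | q (a, g)} : ℝ) := by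
    rw [mul_comm, ← nsmul_eq_mul, ← sum_const]
    exact sum_le_sum fun g hg => hlocal g (mem_filter.mp hg).2
  have hup : ∑ g ∈ S, (#{a | q (a, g)} : ℝ) ≤ ∑ g ∈ S, (#{a ∈ A | a * g ∈ S} : ℝ) := by
    refine sum_le_sum fun g _ => ?_
    refine Nat.cast_le.mpr
      (card_le_card_of_injOn Subtype.val (fun a ha => ?_) Subtype.val_injective.injOn)
    simp only [coe_filter, Set.mem_ofPred_eq, mem_univ, true_and] at ha ⊢
    exact ⟨a.2, mem_filter.mpr ⟨mem_univ _, hclosed a g ha⟩⟩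
  obtain ⟨⟨a, g⟩, hag⟩ := hne
  have hS : (0 : ℝ) < #S := by
    exact_mod_cast card_pos.mpr ⟨g, show g ∈ S from mem_filter.mpr ⟨mem_univ g, a, hag⟩⟩
  have hr : (0 : ℝ) < #A := by exact_mod_cast card_pos.mpr ⟨(a : G), a.2⟩
  have hn : (0 : ℝ) < Fintype.card G := by exact_mod_cast Fintype.card_pos
  have key := (hlow.trans hup).trans (hA.sum_card_filter_le S)
  have hsize : (δ - lam) * Fintype.card G / 2 ≤ #S := by
    have hdens : δ ≤ #S / Fintype.card G + lam * (1 - #S / Fintype.card G) := by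
      refine le_of_mul_le_mul_left ?_ (mul_pos hr hS)
      ring_nf at key ⊢
      linarith
    have hs : 0 ≤ #S / (Fintype.card G : ℝ) := by positivity
    have : δ - lam ≤ 2 * (#S / Fintype.card G) := by nlinarith
    calc (δ - lam) * Fintype.card G / 2 ≤ 2 * (#S / Fintype.card G) * Fintype.card G / 2 := by
          gcongr
      _ = #S := by field_simp
  rw [hsplit]
  exact (mul_le_mul_of_nonneg_left hsize (by positivity)).trans hlow

theorem le_card_filter_of_closed_of_local {β : Type*} [Fintype β] (hA : IsLeftExpander A lam)
    {δ : ℝ} (hlam : -1 ≤ lam) (hδ : 0 ≤ δ) (hgt : lam ≤ δ) (p : A × G × β → Prop)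
    [DecidablePred p] (hclosed : ∀ a g b, p (a, g, b) → ∃ a', p (a', a * g, b))
    (hcol : ∀ g b, (∃ a, p (a, g, b)) → δ * #A ≤ #{a | p (a, g, b)})
    (hrow : ∀ a g, (∃ b, p (a, g, b)) → δ * Fintype.card β ≤ #{b | p (a, g, b)})
    (hne : ∃ t, p t) :
    δ * Fintype.card β * (δ * #A * ((δ - lam) * Fintype.card G / 2)) ≤ #{t | p t} := by
  obtain ⟨⟨a₀, g₀, b₀⟩, h₀⟩ := hne
  set K := δ * #A * ((δ - lam) * Fintype.card G / 2)
  have hK : 0 ≤ K := by have := sub_nonneg.mpr hgt; positivity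
  have hslice (b) (hb : b ∈ ({b | p (a₀, g₀, b)} : Finset β)) :
      K ≤ #{x : A × G | p (x.1, x.2, b)} :=
    hA.le_card_filter_of_closed hlam hδ _ (fun a g => hclosed a g b) (fun g => hcol g b)
      ⟨(a₀, g₀), (mem_filter.mp hb).2⟩
  have hsplit : (#{t | p t} : ℝ) = ∑ b, (#{x : A × G | p (x.1, x.2, b)} : ℝ) := by
    simp only [card_filter, Nat.cast_sum]
    rw [← (Equiv.prodAssoc _ _ _).sum_comp, Fintype.sum_prod_type_right]
    rfl
  calc δ * Fintype.card β * K ≤ #{b | p (a₀, g₀, b)} * K :=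
        mul_le_mul_of_nonneg_right (hrow a₀ g₀ ⟨b₀, h₀⟩) hK
    _ = ∑ b ∈ {b | p (a₀, g₀, b)}, K := by rw [sum_const, nsmul_eq_mul]
    _ ≤ ∑ b ∈ {b | p (a₀, g₀, b)}, (#{x : A × G | p (x.1, x.2, b)} : ℝ) := sum_le_sum hslice
    _ ≤ ∑ b, (#{x : A × G | p (x.1, x.2, b)} : ℝ) :=
        sum_le_sum_of_subset_of_nonneg (subset_univ _) fun _ _ _ => by positivity
    _ = #{t | p t} := hsplit.symm

end IsLeftExpander

section Squares

variable {G : Type*} [Group G] [DecidableEq G]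

theorem card_cSquare_le (a g b : G) : #(cSquare a g b) ≤ 4 := card_le_four

theorem cSquare_inv_mul (a g b : G) : cSquare a⁻¹ (a * g) b = cSquare a g b := by
  ext x
  simp only [cSquare, mem_insert, mem_singleton, inv_inv, inv_mul_cancel_left]
  tauto

variable [Fintype G]

def cayleySquares (A B : Finset G) : Finset (Finset (G × G × G)) :=
  (A ×ˢ (univ : Finset G) ×ˢ B).image fun t => cSquare t.1 t.2.1 t.2.2

theorem two_mul_card_cayleySquares_le {A : Finset G} (B : Finset G) (hAsym : ∀ a ∈ A, a⁻¹ ∈ A)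
    (h1A : (1 : G) ∉ A) : 2 * #(cayleySquares A B) ≤ #A * (Fintype.card G * #B) := by
  rw [← card_univ, ← card_product, ← card_product]
  refine mul_card_image_le_card _ 2 fun s hs => ?_
  obtain ⟨⟨a, g, b⟩, ht, rfl⟩ := mem_image.mp hs
  simp only [mem_product, mem_univ, true_and] at ht
  have hne : (a, g, b) ≠ (a⁻¹, a * g, b) := by
    simp only [ne_eq, Prod.mk.injEq, right_eq_mul, and_true]
    exact fun h => h1A (h.2 ▸ ht.1)
  calc 2 = #{(a, g, b), (a⁻¹, a * g, b)} := (card_pair hne).symm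
    _ ≤ _ := card_le_card fun x hx => by
      rcases mem_insert.mp hx with rfl | hx
      · simp [ht]
      · rw [mem_singleton.mp hx]; simp [ht, hAsym a ht.1, cSquare_inv_mul]

theorem card_filter_le_four_mul_card_cayleySquares (A B : Finset G) (p : A × G × B → Prop)
    [DecidablePred p] :
    #{t | p t} ≤ 4 * #{s ∈ cayleySquares A B |
      ∃ t : A × G × B, ((t.1 : G), t.2.1, (t.2.2 : G)) ∈ s ∧ p t} := by
  refine card_le_mul_card_image_of_maps_to
    (f := fun t => cSquare (t.1 : G) t.2.1 (t.2.2 : G)) ?_ 4 ?_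
  · intro t ht
    refine mem_filter.mpr
      ⟨mem_image.mpr ⟨((t.1 : G), t.2.1, (t.2.2 : G)), ?_, rfl⟩, t, ?_, (mem_filter.mp ht).2⟩
    · simp
    · simp [cSquare]
  · intro s hs
    obtain ⟨⟨a, g, b⟩, -, rfl⟩ := mem_image.mp (mem_filter.mp hs).1
    refine (card_le_card_of_injOn (t := cSquare a g b)
      (fun t => ((t.1 : G), t.2.1, (t.2.2 : G))) ?_ ?_).trans (card_cSquare_le a g b)
    · intro t ht
      simp only [coe_filter, mem_filter, mem_univ, true_and, Set.mem_ofPred_eq] at ht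
      simpa [← ht.2] using (show _ ∈ cSquare _ _ _ by simp [cSquare])
    · intro t _ u _ h
      simp only [Prod.mk.injEq] at h
      ext <;> simp [h]

end Squares

theorem mul_le_card_filter_ne_zero {ι M : Type*} [Fintype ι] [Zero M] [DecidableEq M] {r : ℕ}
    {δ : ℝ} {C : Set (Fin r → M)} (hC : ∀ w ∈ C, w ≠ 0 → δ * r ≤ #{i | w i ≠ 0}) (e : ι ≃ Fin r)
    {v : ι → M} (hv : (fun i => v (e.symm i)) ∈ C) (hv0 : ∃ i, v i ≠ 0) :
    δ * r ≤ #{i | v i ≠ 0} := by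
  obtain ⟨i, hi⟩ := hv0
  have := hC _ hv (Function.ne_iff.mpr ⟨e i, by simpa using hi⟩)
  rwa [card_equiv e.symm (t := {i | v i ≠ 0}) (by simp)] at this

theorem distance_bound_of_nonpos {δ lam n r N W : ℝ} (hlam : -1 ≤ lam * (n - 1)) (hr : 1 ≤ r)
    (hrn : r + 1 ≤ n) (hN0 : 0 ≤ N) (hN : 2 * N ≤ r * (n * r)) (hW : 1 ≤ W) (hgt : lam < δ)
    (hδ : δ ≤ 0) : 1 / 4 * δ ^ 2 * (δ - lam) * N ≤ W := by
  set x := -lam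
  have hx : 0 < x := by linarith
  have hxr : x * r ≤ 1 := by nlinarith
  have hxn : x * n ≤ 2 := by nlinarith
  have hcoef : δ ^ 2 * (δ - lam) ≤ x ^ 3 := by
    have : δ ^ 2 ≤ x ^ 2 := by nlinarith
    have : δ - lam ≤ x := by linarith
    calc δ ^ 2 * (δ - lam) ≤ x ^ 2 * x := by gcongr
      _ = x ^ 3 := by ring
  calc 1 / 4 * δ ^ 2 * (δ - lam) * N ≤ 1 / 4 * x ^ 3 * N := by nlinarith
    _ ≤ 1 / 8 * x ^ 3 * (r * (n * r)) := by nlinarith [pow_pos hx 3]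
    _ = 1 / 8 * (x * r) ^ 2 * (x * n) := by ring
    _ ≤ 1 / 8 * 1 ^ 2 * 2 := by gcongr; exact mul_nonneg hx.le (by linarith)
    _ ≤ W := by linarith

theorem stmt11_general {G : Type*} [Group G] [Fintype G] [DecidableEq G]
    (A B : Finset G) (r : ℕ) (hcA : A.card = r) (hcB : B.card = r)
    (hAsym : ∀ a ∈ A, a⁻¹ ∈ A)
    (h1A : (1 : G) ∉ A)
    (lam : ℝ)
    (hexpA : ∀ h : G → ℝ, ∑ g, h g = 0 →
      ∑ g, h g * ∑ a ∈ A, h (a * g) ≤ lam * r * ∑ g, h g ^ 2)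
    (ea : ↥A ≃ Fin r) (eb : ↥B ≃ Fin r)
    (invA : ↥A ≃ ↥A)
    (invB : ↥B ≃ ↥B)
    (C1 : Submodule (ZMod 2) (Fin r → ZMod 2))
    (δ1 : ℝ) (hδ1 : ∀ w : Fin r → ZMod 2, w ∈ C1 → w ≠ 0 →
      δ1 * r ≤ ((univ.filter fun i : Fin r => w i ≠ 0).card : ℝ))
    (hgt : lam < δ1)
    (C : Submodule (ZMod 2) (↥A × G × ↥B → ZMod 2))
    (hC : ∀ f : ↥A × G × ↥B → ZMod 2, f ∈ C ↔
      ((∀ (a : ↥A) (g : G) (b : ↥B),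
          f (a, g, b) = f (invA a, (a : G) * g, b) ∧
          f (a, g, b) = f (a, g * (b : G), invB b)) ∧
       ((∀ (a : ↥A) (g : G), (fun i : Fin r => f (a, g, eb.symm i)) ∈ C1) ∧
        (∀ (g : G) (b : ↥B), (fun i : Fin r => f (ea.symm i, g, b)) ∈ C1)))) :
    ∀ f : ↥A × G × ↥B → ZMod 2, f ∈ C → f ≠ 0 →
      (1 / 4) * δ1 ^ 2 * (δ1 - lam) *
          ((((A ×ˢ (univ : Finset G) ×ˢ B).image fun t =>
              cSquare t.1 t.2.1 t.2.2)).card : ℝ)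
        ≤ (((((A ×ˢ (univ : Finset G) ×ˢ B).image fun t =>
              cSquare t.1 t.2.1 t.2.2)).filter fun s =>
            ∃ t : ↥A × G × ↥B, ((t.1 : G), t.2.1, (t.2.2 : G)) ∈ s ∧ f t ≠ 0).card : ℝ) := by
  intro f hfC hf0
  subst hcA
  obtain ⟨hinv, hrowC, hcolC⟩ := (hC f).mp hfC
  obtain ⟨t₀, hf₀⟩ : ∃ t, f t ≠ 0 := Function.ne_iff.mp hf0
  have hA : IsLeftExpander A lam := hexpA
  have hr : (1 : ℝ) ≤ #A := by exact_mod_cast card_pos.mpr ⟨_, t₀.1.2⟩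
  have hrn : (#A : ℝ) + 1 ≤ Fintype.card G := by exact_mod_cast card_lt_univ_of_notMem h1A
  have hlam := hA.neg_one_le_mul_card_sub_one ⟨_, t₀.1.2⟩
  have hsq : 2 * (#(cayleySquares A B) : ℝ) ≤ #A * (Fintype.card G * #A) := by
    exact_mod_cast hcB ▸ two_mul_card_cayleySquares_le B hAsym h1A
  have hsupp := card_filter_le_four_mul_card_cayleySquares A B (fun t => f t ≠ 0)
  have hsupp_pos : 0 < #{t | f t ≠ 0} := card_pos.mpr ⟨t₀, mem_filter.mpr ⟨mem_univ _, hf₀⟩⟩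
  change _ * (#(cayleySquares A B) : ℝ) ≤ #{s ∈ cayleySquares A B | _}
  rcases le_or_gt δ1 0 with hδ | hδ
  · exact distance_bound_of_nonpos hlam hr hrn (Nat.cast_nonneg _) hsq
      (Nat.one_le_cast.mpr (by omega)) hgt hδ
  have hweight := hA.le_card_filter_of_closed_of_local (by nlinarith) hδ.le hgt.le
    (fun t => f t ≠ 0)
    (fun a g b h => ⟨invA a, (hinv a g b).1 ▸ h⟩)
    (fun g b h => mul_le_card_filter_ne_zero hδ1 ea (hcolC g b) h)
    (fun a g h => by simpa [hcB] using mul_le_card_filter_ne_zero hδ1 eb (hrowC a g) h) ⟨_, hf₀⟩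
  have hsuppR := (Nat.cast_le (α := ℝ)).mpr hsupp
  push_cast at hsuppR
  simp only [Fintype.card_coe, hcB] at hweight
  nlinarith [mul_le_mul_of_nonneg_left hsq (by positivity : (0 : ℝ) ≤ δ1 ^ 2 * (δ1 - lam))]

/-- **Distance of left/right Cayley expander codes:**
`δ(C[G,A,B,C₁]) ≥ (1/4)·δ(C₁)²·(δ(C₁) − λ)`.  Codewords are modeled as invariant
functions `f : A × G × B → F₂` with every edge view in `C₁`; the weight of `f` is the
number of squares on which it is nonzero, and the block length is the number of
squares. -/
theorem stmt11 {G : Type*} [Group G] [Fintype G] [DecidableEq G]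
    (A B : Finset G) (r : ℕ) (hcA : A.card = r) (hcB : B.card = r)
    (hAsym : ∀ a ∈ A, a⁻¹ ∈ A) (hBsym : ∀ b ∈ B, b⁻¹ ∈ B)
    (h1A : (1 : G) ∉ A) (h1B : (1 : G) ∉ B)
    (lam : ℝ)
    (hexpA : ∀ h : G → ℝ, ∑ g, h g = 0 →
      ∑ g, h g * ∑ a ∈ A, h (a * g) ≤ lam * r * ∑ g, h g ^ 2)
    (hexpB : ∀ h : G → ℝ, ∑ g, h g = 0 →
      ∑ g, h g * ∑ b ∈ B, h (g * b) ≤ lam * r * ∑ g, h g ^ 2)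
    (ea : ↥A ≃ Fin r) (eb : ↥B ≃ Fin r)
    (invA : ↥A ≃ ↥A) (hinvA : ∀ a : ↥A, ((invA a : G)) = (a : G)⁻¹)
    (invB : ↥B ≃ ↥B) (hinvB : ∀ b : ↥B, ((invB b : G)) = (b : G)⁻¹)
    (C1 : Submodule (ZMod 2) (Fin r → ZMod 2))
    (δ1 : ℝ) (hδ1 : ∀ w : Fin r → ZMod 2, w ∈ C1 → w ≠ 0 →
      δ1 * r ≤ ((univ.filter fun i : Fin r => w i ≠ 0).card : ℝ))
    (hgt : lam < δ1)
    (C : Submodule (ZMod 2) (↥A × G × ↥B → ZMod 2))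
    (hC : ∀ f : ↥A × G × ↥B → ZMod 2, f ∈ C ↔
      ((∀ (a : ↥A) (g : G) (b : ↥B),
          f (a, g, b) = f (invA a, (a : G) * g, b) ∧
          f (a, g, b) = f (a, g * (b : G), invB b)) ∧
       ((∀ (a : ↥A) (g : G), (fun i : Fin r => f (a, g, eb.symm i)) ∈ C1) ∧
        (∀ (g : G) (b : ↥B), (fun i : Fin r => f (ea.symm i, g, b)) ∈ C1)))) :
    ∀ f : ↥A × G × ↥B → ZMod 2, f ∈ C → f ≠ 0 →
      (1 / 4) * δ1 ^ 2 * (δ1 - lam) *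
          ((((A ×ˢ (univ : Finset G) ×ˢ B).image fun t =>
              cSquare t.1 t.2.1 t.2.2)).card : ℝ)
        ≤ (((((A ×ˢ (univ : Finset G) ×ˢ B).image fun t =>
              cSquare t.1 t.2.1 t.2.2)).filter fun s =>
            ∃ t : ↥A × G × ↥B, ((t.1 : G), t.2.1, (t.2.2 : G)) ∈ s ∧ f t ≠ 0).card : ℝ) :=
  stmt11_general A B r hcA hcB hAsym h1A lam hexpA ea eb invA invB C1 δ1 hδ1 hgt C hC
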